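/- (Bezrukov) Let H and G be finite simple graphs with nested solutions, with vertex sets identified with {0,…,|V_H|−1} and {0,…,|V_G|−1} via optimal orders. If A ⊆ V_H × V_G is compressed, then I_{H□G}(A) = Σ_{(x,y) ∈ A} ( δ_H(x+1) + δ_G(y+1) ), where δ_H(m) = I_H(m) − I_H(m−1) and δ_G(m) = I_G(m) − I_G(m−1). -/

import Mathlib

open Finset
open scoped Classical

/-- Number of edges of `G` with both endpoints in `A`. -/
noncomputable def edgesIn {V : Type*} [Fintype V] (G : SimpleGraph V) (A : Finset V) : ℕ :=
  (G.edgeFinset.filter (fun e => ∀ v ∈ e, v ∈ A)).card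

/-- `I_G(m)`: maximum number of induced edges over all `m`-subsets. -/
noncomputable def maxEdgesIn {V : Type*} [Fintype V] (G : SimpleGraph V) (m : ℕ) : ℕ :=
  (Finset.univ.powersetCard m).sup (edgesIn G)

/-- The `δ`-sequence of `G`. -/
noncomputable def deltaSeq {V : Type*} [Fintype V] (G : SimpleGraph V) (m : ℕ) : ℤ :=
  (maxEdgesIn G m : ℤ) - (maxEdgesIn G (m - 1) : ℤ)

/-- `G` has nested solutions. -/
def hasNS {V : Type*} [Fintype V] (G : SimpleGraph V) : Prop :=
  ∃ A : ℕ → Finset V,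
    (∀ i, 1 ≤ i → i < Fintype.card V → A i ⊆ A (i + 1)) ∧
    (∀ i, 1 ≤ i → i ≤ Fintype.card V →
      (A i).card = i ∧ edgesIn G (A i) = maxEdgesIn G i)

/-- `G` is `δ`-dense. -/
def deltaDense {V : Type*} [Fintype V] (G : SimpleGraph V) : Prop :=
  ∀ i, 2 ≤ i → i ≤ Fintype.card V → deltaSeq G i ≤ deltaSeq G (i - 1) → 2 ≤ deltaSeq G i

/-- The `d`-th cartesian power of `G`. -/
def cartPower {V : Type*} (G : SimpleGraph V) (d : ℕ) : SimpleGraph (Fin d → V) where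
  Adj x y := ∃ i, G.Adj (x i) (y i) ∧ ∀ j, j ≠ i → x j = y j
  symm := by
    constructor
    rintro x y ⟨i, h, hj⟩
    exact ⟨i, h.symm, fun j hje => (hj j hje).symm⟩
  loopless := by
    constructor
    rintro x ⟨i, h, -⟩
    exact G.irrefl h

/-- The initial segment `{0, …, k-1}` of `Fin N`. -/
def finSeg (N k : ℕ) : Finset (Fin N) :=
  Finset.univ.filter (fun v => (v : ℕ) < k)

/-- The set of the first `m` elements under a (strict total) order `r`. -/
noncomputable def initSeg {α : Type*} [Fintype α] (r : α → α → Prop) (m : ℕ) : Finset α :=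
  Finset.univ.filter (fun u => (Finset.univ.filter (fun w => r w u)).card < m)

/-- Strict lexicographic order on tuples. -/
def lexLt {n N : ℕ} (x y : Fin n → Fin N) : Prop :=
  ∃ i, (∀ j, j < i → x j = y j) ∧ x i < y i

/-- Strict colexicographic order on tuples. -/
def colexLt {n N : ℕ} (x y : Fin n → Fin N) : Prop :=
  ∃ i, (∀ j, i < j → x j = y j) ∧ x i < y i

/-- Strict lexicographic order on pairs. -/
def lexPair {N : ℕ} (p q : Fin N × Fin N) : Prop :=
  p.1 < q.1 ∨ (p.1 = q.1 ∧ p.2 < q.2)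

/-- Strict colexicographic order on pairs. -/
def colexPair {N : ℕ} (p q : Fin N × Fin N) : Prop :=
  p.2 < q.2 ∨ (p.2 = q.2 ∧ p.1 < q.1)

/-- A subset of `Fin M × Fin N` is compressed. -/
def IsCompressed {M N : ℕ} (A : Finset (Fin M × Fin N)) : Prop :=
  (∀ a : Fin M, ∀ y y' : Fin N, (a, y) ∈ A → y' ≤ y → (a, y') ∈ A) ∧
  (∀ b : Fin N, ∀ x x' : Fin M, (x, b) ∈ A → x' ≤ x → (x', b) ∈ A)

/-- Number of boundary edges: edges with exactly one endpoint in `A`. -/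
noncomputable def edgesBd {V : Type*} [Fintype V] (G : SimpleGraph V) (A : Finset V) : ℕ :=
  (G.edgeFinset.filter (fun e => ∃ u ∈ e, ∃ v ∈ e, u ∈ A ∧ v ∉ A)).card

/-!
Every edge of `H □ G` inside `A` joins two points of a row `{y | (x, y) ∈ A}` by an edge of `G`,
or two points of a column by an edge of `H`. In a compressed set each row is an initial segment
`{0, …, k-1}` of the optimal order of `G`, so it spans `I_G(k) = δ_G(1) + ⋯ + δ_G(k)` edges, which
distributes `δ_G(y + 1)` to each of its points `(x, y)`; the columns contribute `δ_H(x + 1)` likewise.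
-/

open SimpleGraph

section EdgeCount

variable {V : Type*} [Fintype V]

lemma two_mul_edgesIn (G : SimpleGraph V) (A : Finset V) :
    2 * edgesIn G A = ∑ v ∈ A, #{w ∈ A | G.Adj v w} := by
  set G' := G ⊓ fromEdgeSet {e | ∀ v ∈ e, v ∈ A}
  have hedges : edgesIn G A = #G'.edgeFinset := by
    unfold edgesIn
    congr 1
    ext e
    simp only [G', mem_filter, mem_edgeFinset, edgeSet_inf, edgeSet_fromEdgeSet]
    exact ⟨fun ⟨he, hA⟩ => ⟨he, hA, G.not_isDiag_of_mem_edgeSet he⟩,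
      fun ⟨he, hA, _⟩ => ⟨he, hA⟩⟩
  have hdouble : 2 * #G'.edgeFinset = #{p : V × V | G'.Adj p.1 p.2} := by
    convert G'.two_mul_card_edgeFinset
  have hpairs : ({p | G'.Adj p.1 p.2} : Finset (V × V)) = {p ∈ A ×ˢ A | G.Adj p.1 p.2} := by
    ext ⟨u, v⟩
    simp only [G', inf_adj, fromEdgeSet_adj, Set.mem_ofPred_eq, Sym2.mem_iff, mem_filter, mem_univ,
      mem_product, true_and]
    exact ⟨fun ⟨h, hA, _⟩ => ⟨⟨hA u (.inl rfl), hA v (.inr rfl)⟩, h⟩,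
      fun ⟨⟨hu, hv⟩, h⟩ => ⟨h, by rintro w (rfl | rfl) <;> assumption, h.ne⟩⟩
  rw [hedges, hdouble, hpairs, card_filter, sum_product]
  simp only [card_filter]

lemma edgesIn_empty (G : SimpleGraph V) : edgesIn G ∅ = 0 := by
  simpa using two_mul_edgesIn G ∅

lemma maxEdgesIn_zero (G : SimpleGraph V) : maxEdgesIn G 0 = 0 := by
  rw [maxEdgesIn, powersetCard_zero, sup_singleton, edgesIn_empty]

lemma sum_range_deltaSeq (G : SimpleGraph V) (k : ℕ) :
    ∑ i ∈ range k, deltaSeq G (i + 1) = maxEdgesIn G k := by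
  simp only [deltaSeq, Nat.add_sub_cancel]
  rw [sum_range_sub (fun i => (maxEdgesIn G i : ℤ)), maxEdgesIn_zero, Nat.cast_zero, sub_zero]

end EdgeCount

section InitialSegment

variable {N : ℕ}

lemma map_valEmbedding_finSeg {k : ℕ} (hk : k ≤ N) :
    (finSeg N k).map Fin.valEmbedding = range k := by
  ext i
  simp only [finSeg, mem_map, mem_filter, mem_univ, true_and, Fin.valEmbedding_apply, mem_range]
  exact ⟨fun ⟨a, ha, hai⟩ => hai ▸ ha, fun hi => ⟨⟨i, by omega⟩, hi, rfl⟩⟩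

lemma eq_finSeg_card_of_isLowerSet {S : Finset (Fin N)} (hS : IsLowerSet (S : Set (Fin N))) :
    S = finSeg N #S := by
  ext y
  simp only [finSeg, mem_filter, mem_univ, true_and]
  constructor
  · intro hy
    have := card_le_card (fun z hz => hS (mem_Iic.1 hz) hy : Iic y ⊆ S)
    rw [Fin.card_Iic] at this
    omega
  · intro hy
    by_contra hy'
    have := card_le_card (fun z hz => mem_Iio.2 (lt_of_not_ge fun h => hy' (hS h hz)) : S ⊆ Iio y)
    rw [Fin.card_Iio] at this
    omega

lemma edgesIn_eq_sum_deltaSeq_of_isLowerSet {G : SimpleGraph (Fin N)}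
    (hG : ∀ k, k ≤ N → edgesIn G (finSeg N k) = maxEdgesIn G k)
    {S : Finset (Fin N)} (hS : IsLowerSet (S : Set (Fin N))) :
    (edgesIn G S : ℤ) = ∑ y ∈ S, deltaSeq G (y + 1) := by
  have hk : #S ≤ N := by simpa using card_le_univ S
  rw [eq_finSeg_card_of_isLowerSet hS, hG _ hk, ← sum_range_deltaSeq,
    ← map_valEmbedding_finSeg hk, sum_map]
  rfl

end InitialSegment

section Product

variable {α β : Type*}

noncomputable def row [Fintype β] (A : Finset (α × β)) (x : α) : Finset β :=
  {y | (x, y) ∈ A}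

noncomputable def col [Fintype α] (A : Finset (α × β)) (y : β) : Finset α :=
  {x | (x, y) ∈ A}

@[simp] lemma mem_row [Fintype β] {A : Finset (α × β)} {x : α} {y : β} :
    y ∈ row A x ↔ (x, y) ∈ A := by
  simp [row]

@[simp] lemma mem_col [Fintype α] {A : Finset (α × β)} {x : α} {y : β} :
    x ∈ col A y ↔ (x, y) ∈ A := by
  simp [col]

variable [Fintype α] [Fintype β]

lemma sum_eq_sum_sum_row {M : Type*} [AddCommMonoid M]
    (A : Finset (α × β)) (f : α × β → M) :
    ∑ p ∈ A, f p = ∑ x, ∑ y ∈ row A x, f (x, y) :=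
  sum_finset_product _ _ _ (by simp)

lemma sum_eq_sum_sum_col {M : Type*} [AddCommMonoid M]
    (A : Finset (α × β)) (f : α × β → M) :
    ∑ p ∈ A, f p = ∑ y, ∑ x ∈ col A y, f (x, y) :=
  sum_finset_product_right _ _ _ (by simp)

lemma card_boxProd_adj_filter (H : SimpleGraph α) (G : SimpleGraph β)
    (A : Finset (α × β)) (p : α × β) :
    #{q ∈ A | (H □ G).Adj p q} =
      #{y ∈ row A p.1 | G.Adj p.2 y} + #{x ∈ col A p.2 | H.Adj p.1 x} := by
  have hrow : {q ∈ A | G.Adj p.2 q.2 ∧ p.1 = q.1}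
      = {y ∈ row A p.1 | G.Adj p.2 y}.map (Function.Embedding.sectR p.1 β) := by
    ext ⟨x, y⟩
    simp only [mem_filter, mem_map, mem_row, Function.Embedding.sectR_apply, Prod.mk.injEq]
    aesop
  have hcol : {q ∈ A | H.Adj p.1 q.1 ∧ p.2 = q.2}
      = {x ∈ col A p.2 | H.Adj p.1 x}.map (Function.Embedding.sectL α p.2) := by
    ext ⟨x, y⟩
    simp only [mem_filter, mem_map, mem_col, Function.Embedding.sectL_apply, Prod.mk.injEq]
    aesop
  have hdisj :
      Disjoint {q ∈ A | G.Adj p.2 q.2 ∧ p.1 = q.1} {q ∈ A | H.Adj p.1 q.1 ∧ p.2 = q.2} :=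
    disjoint_filter.2 fun q _ hG hH => hG.1.ne hH.2
  simp only [boxProd_adj, or_comm (a := H.Adj p.1 _ ∧ _)]
  rw [filter_or, card_union_of_disjoint hdisj, hrow, hcol, card_map, card_map]

lemma sum_card_adj_row (G : SimpleGraph β) (A : Finset (α × β)) :
    ∑ p ∈ A, #{y ∈ row A p.1 | G.Adj p.2 y} = 2 * ∑ x, edgesIn G (row A x) := by
  simp_rw [sum_eq_sum_sum_row A, mul_sum, two_mul_edgesIn]

lemma sum_card_adj_col (H : SimpleGraph α) (A : Finset (α × β)) :
    ∑ p ∈ A, #{x ∈ col A p.2 | H.Adj p.1 x} = 2 * ∑ y, edgesIn H (col A y) := by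
  simp_rw [sum_eq_sum_sum_col A, mul_sum, two_mul_edgesIn]

lemma two_mul_edgesIn_boxProd (H : SimpleGraph α) (G : SimpleGraph β)
    (A : Finset (α × β)) :
    2 * edgesIn (H □ G) A = 2 * ∑ x, edgesIn G (row A x) + 2 * ∑ y, edgesIn H (col A y) := by
  rw [two_mul_edgesIn, ← sum_card_adj_row, ← sum_card_adj_col, ← sum_add_distrib]
  exact sum_congr rfl fun p _ => card_boxProd_adj_filter H G A p

end Product

lemma IsCompressed.isLowerSet_row {M N : ℕ} {A : Finset (Fin M × Fin N)} (hA : IsCompressed A)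
    (x : Fin M) : IsLowerSet (row A x : Set (Fin N)) :=
  fun y y' hle hy => mem_row.2 (hA.1 x y y' (mem_row.1 hy) hle)

lemma IsCompressed.isLowerSet_col {M N : ℕ} {A : Finset (Fin M × Fin N)} (hA : IsCompressed A)
    (y : Fin N) : IsLowerSet (col A y : Set (Fin M)) :=
  fun x x' hle hx => mem_col.2 (hA.2 y x x' (mem_col.1 hx) hle)

/-- Bezrukov.  `H` and `G` are graphs on `{0, …, M-1}` and
`{0, …, N-1}` whose identifications are optimal orders.  If
`A ⊆ V_H × V_G` is compressed, then
`I_{H□G}(A) = Σ_{(x,y) ∈ A} (δ_H(x+1) + δ_G(y+1))`. -/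
theorem stmt_6 {M N : ℕ} (H : SimpleGraph (Fin M)) (G : SimpleGraph (Fin N))
    (hH : ∀ k, k ≤ M → edgesIn H (finSeg M k) = maxEdgesIn H k)
    (hG : ∀ k, k ≤ N → edgesIn G (finSeg N k) = maxEdgesIn G k)
    (A : Finset (Fin M × Fin N)) (hA : IsCompressed A) :
    (edgesIn (H.boxProd G) A : ℤ) =
      ∑ p ∈ A, (deltaSeq H ((p.1 : ℕ) + 1) + deltaSeq G ((p.2 : ℕ) + 1)) := by
  have hrows : ∀ x, (edgesIn G (row A x) : ℤ) = ∑ y ∈ row A x, deltaSeq G (y + 1) :=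
    fun x => edgesIn_eq_sum_deltaSeq_of_isLowerSet hG (hA.isLowerSet_row x)
  have hcols : ∀ y, (edgesIn H (col A y) : ℤ) = ∑ x ∈ col A y, deltaSeq H (x + 1) :=
    fun y => edgesIn_eq_sum_deltaSeq_of_isLowerSet hH (hA.isLowerSet_col y)
  have hdouble := two_mul_edgesIn_boxProd H G A
  zify at hdouble
  rw [sum_add_distrib, sum_eq_sum_sum_col A, sum_eq_sum_sum_row A (fun p => deltaSeq G _)]
  simp_rw [← hrows, ← hcols]
  linarith
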